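/- arXiv:1807.06109 — 3 statements merged into one kernel-verified Lean document; each statement's English description precedes it below -/
import Mathlib

section
/- Let θ ∈ (1,2), Θ = 1/(2−θ), and let minmod(a,b,c) denote the number of smallest absolute value in the convex hull of {a,b,c} (in particular minmod(a,b,c) = 0 if the arguments do not all have the same sign, and otherwise equals the argument of smallest absolute value when all have the same sign). Given nonnegative values w_{i−1}, w_i, w_{i+1}, w_{i+2} ≥ 0 and slopes s_j = minmod(θ(w_{j+1}−w_j)/Δx, (w_{j+1}−w_{j−1})/(2Δx), θ(w_j−w_{j−1})/Δx), define D(w)_i = (1/Δx⁴)((w_{i+1} − (Δx/2)s_{i+1}) − (w_i + (Δx/2)s_i) − (w_i − (Δx/2)s_i) + (w_{i−1} + (Δx/2)s_{i−1})). Then in the case w_{i+1} ≥ w_i ≥ w_{i−1}, one has Δx⁴ D(w)_i ≥ (1 − θ/2)w_{i+1} − (2 − θ/2)w_i + w_{i−1}. -/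
/-- The minmod limiter: the real number of smallest absolute value in the convex
hull of the three arguments. -/
noncomputable def minmod (a b c : ℝ) : ℝ :=
  if 0 < min a (min b c) then min a (min b c)
  else if max a (max b c) < 0 then max a (max b c)
  else 0

/-- The minmod slope s_j. -/
noncomputable def slopeMM (θ Δx : ℝ) (w : ℤ → ℝ) (j : ℤ) : ℝ :=
  minmod (θ * (w (j + 1) - w j) / Δx) ((w (j + 1) - w (j - 1)) / (2 * Δx))
    (θ * (w j - w (j - 1)) / Δx)

/-- The artificial dissipation operator D(w)_i. -/
noncomputable def Dop (θ Δx : ℝ) (w : ℤ → ℝ) (i : ℤ) : ℝ :=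
  (1 / Δx ^ 4) *
    ((w (i + 1) - Δx / 2 * slopeMM θ Δx w (i + 1)) - (w i + Δx / 2 * slopeMM θ Δx w i)
      - (w i - Δx / 2 * slopeMM θ Δx w i) + (w (i - 1) + Δx / 2 * slopeMM θ Δx w (i - 1)))

lemma minmod_nonneg {a : ℝ} (b c : ℝ) (ha : 0 ≤ a) : 0 ≤ minmod a b c := by
  unfold minmod
  split_ifs with hpos hneg
  · exact hpos.le
  · exact absurd ((le_max_left _ _).trans_lt hneg) ha.not_gt
  · rfl

lemma minmod_le_right (a b : ℝ) {c : ℝ} (hc : 0 ≤ c) : minmod a b c ≤ c := by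
  unfold minmod
  split_ifs with hpos hneg
  · exact (min_le_right _ _).trans (min_le_right _ _)
  · exact absurd ((le_max_of_le_right (le_max_right _ _)).trans_lt hneg) hc.not_gt
  · exact hc

section slopeMM

variable {θ Δx : ℝ} {w : ℤ → ℝ} {j : ℤ}

lemma slopeMM_nonneg (hθ : 0 ≤ θ) (hΔx : 0 ≤ Δx) (hw : w j ≤ w (j + 1)) :
    0 ≤ slopeMM θ Δx w j :=
  minmod_nonneg _ _ (div_nonneg (mul_nonneg hθ (sub_nonneg.mpr hw)) hΔx)

lemma slopeMM_le (hθ : 0 ≤ θ) (hΔx : 0 ≤ Δx) (hw : w (j - 1) ≤ w j) :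
    slopeMM θ Δx w j ≤ θ * (w j - w (j - 1)) / Δx :=
  minmod_le_right _ _ (div_nonneg (mul_nonneg hθ (sub_nonneg.mpr hw)) hΔx)

end slopeMM

lemma pow_four_mul_Dop {Δx : ℝ} (θ : ℝ) (w : ℤ → ℝ) (i : ℤ) (hΔx : Δx ≠ 0) :
    Δx ^ 4 * Dop θ Δx w i =
      w (i + 1) - 2 * w i + w (i - 1)
        - Δx / 2 * slopeMM θ Δx w (i + 1) + Δx / 2 * slopeMM θ Δx w (i - 1) := by
  unfold Dop
  field_simp
  ring

theorem stmt_3_general (θ Δx : ℝ) (w : ℤ → ℝ) (i : ℤ)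
    (hθ1 : 1 < θ) (hΔx : 0 < Δx)
    (h1 : w i ≤ w (i + 1)) (h2 : w (i - 1) ≤ w i) :
    Δx ^ 4 * Dop θ Δx w i ≥ (1 - θ / 2) * w (i + 1) - (2 - θ / 2) * w i + w (i - 1) := by
  have hθ : 0 ≤ θ := by linarith
  have hleft : 0 ≤ slopeMM θ Δx w (i - 1) :=
    slopeMM_nonneg hθ hΔx.le (by rwa [sub_add_cancel])
  have hright : Δx / 2 * slopeMM θ Δx w (i + 1) ≤ θ / 2 * (w (i + 1) - w i) := by
    have hs := slopeMM_le (j := i + 1) hθ hΔx.le (by rwa [add_sub_cancel_right])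
    rw [add_sub_cancel_right, le_div_iff₀ hΔx] at hs
    linarith
  rw [pow_four_mul_Dop θ w i hΔx.ne']
  linarith [mul_nonneg (half_pos hΔx).le hleft]

/-- in the case w_{i+1} ≥ w_i ≥ w_{i−1}, with nonnegative data,
Δx⁴ D(w)_i ≥ (1 − θ/2)w_{i+1} − (2 − θ/2)w_i + w_{i−1}. -/
theorem stmt_3 (θ Δx : ℝ) (w : ℤ → ℝ) (i : ℤ)
    (hθ1 : 1 < θ) (hθ2 : θ < 2) (hΔx : 0 < Δx)
    (hw : ∀ j : ℤ, i - 1 ≤ j → j ≤ i + 2 → 0 ≤ w j)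
    (h1 : w i ≤ w (i + 1)) (h2 : w (i - 1) ≤ w i) :
    Δx ^ 4 * Dop θ Δx w i ≥ (1 - θ / 2) * w (i + 1) - (2 - θ / 2) * w i + w (i - 1) :=
  stmt_3_general θ Δx w i hθ1 hΔx h1 h2
end

section
/- Let ε > 0, σ_s^min > 0, Δx, Δy > 0, θ ∈ (1,2), Θ = 1/(2−θ), and γ_max = ε²/(ε² + σ_s^min Δt). If 0 < Δt ≤ σ_s^min · Δx²Δy² / ((2+Θ²)Δx² + (1/2 + 2Θ²)ΔxΔy + (2+Θ²)Δy²), then 1 − γ_max (2ΘΔt/(εΔx) + 2ΘΔt/(εΔy) + 2Δt²/(ε²Δx²) + Δt²/(2ε²ΔxΔy) + 2Δt²/(ε²Δy²)) ≥ 0. -/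
/-!
Multiplying by `(ε² + σ Δt) / ε²` turns the claim into `h(ε) ≥ 0` for the quadratic `h` below.
Completing the square at `ε* = Θ Δt (Δx + Δy) / (Δx Δy)` gives
`h(ε) = (ε - ε*)² + Δt (σ - Δt D / (Δx² Δy²))`, where `D` is the denominator of `Δt_par`,
and both terms are nonnegative once `0 ≤ Δt ≤ Δt_par`.
-/

noncomputable def parabolicTimeStep (σ Θ Δx Δy : ℝ) : ℝ :=
  σ * (Δx ^ 2 * Δy ^ 2) /
    ((2 + Θ ^ 2) * Δx ^ 2 + (1 / 2 + 2 * Θ ^ 2) * (Δx * Δy) + (2 + Θ ^ 2) * Δy ^ 2)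

noncomputable def cflParabola (σ Θ Δx Δy Δt ε : ℝ) : ℝ :=
  ε ^ 2 + σ * Δt - Δt * (2 * Θ * ε / Δx + 2 * Θ * ε / Δy + 2 * Δt / Δx ^ 2
    + Δt / (2 * Δx * Δy) + 2 * Δt / Δy ^ 2)

section

variable {σ Θ Δx Δy Δt : ℝ}

theorem cflParabola_eq_sq_add (ε : ℝ) (hΔx : Δx ≠ 0) (hΔy : Δy ≠ 0) :
    cflParabola σ Θ Δx Δy Δt ε =
      (ε - Θ * Δt * (Δx + Δy) / (Δx * Δy)) ^ 2 +
        Δt * (σ - Δt * ((2 + Θ ^ 2) * Δx ^ 2 + (1 / 2 + 2 * Θ ^ 2) * (Δx * Δy)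
          + (2 + Θ ^ 2) * Δy ^ 2) / (Δx ^ 2 * Δy ^ 2)) := by
  unfold cflParabola
  field_simp
  ring

theorem cflParabola_nonneg (ε : ℝ) (hΔx : 0 < Δx) (hΔy : 0 < Δy) (hΔt0 : 0 ≤ Δt)
    (hΔt : Δt ≤ parabolicTimeStep σ Θ Δx Δy) : 0 ≤ cflParabola σ Θ Δx Δy Δt ε := by
  have hD : 0 < (2 + Θ ^ 2) * Δx ^ 2 + (1 / 2 + 2 * Θ ^ 2) * (Δx * Δy)
      + (2 + Θ ^ 2) * Δy ^ 2 := by positivity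
  have hσ : Δt * ((2 + Θ ^ 2) * Δx ^ 2 + (1 / 2 + 2 * Θ ^ 2) * (Δx * Δy)
      + (2 + Θ ^ 2) * Δy ^ 2) / (Δx ^ 2 * Δy ^ 2) ≤ σ := by
    rw [div_le_iff₀ (by positivity), ← le_div_iff₀ hD]
    exact hΔt
  rw [cflParabola_eq_sq_add ε hΔx.ne' hΔy.ne']
  have := mul_nonneg hΔt0 (sub_nonneg.mpr hσ)
  positivity

theorem one_sub_mul_eq_cflParabola_div {ε : ℝ} (hε : ε ≠ 0) (hΔx : Δx ≠ 0) (hΔy : Δy ≠ 0)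
    (hγ : ε ^ 2 + σ * Δt ≠ 0) :
    1 - ε ^ 2 / (ε ^ 2 + σ * Δt) *
        (2 * Θ * Δt / (ε * Δx) + 2 * Θ * Δt / (ε * Δy) + 2 * Δt ^ 2 / (ε ^ 2 * Δx ^ 2)
          + Δt ^ 2 / (2 * ε ^ 2 * Δx * Δy) + 2 * Δt ^ 2 / (ε ^ 2 * Δy ^ 2)) =
      cflParabola σ Θ Δx Δy Δt ε / (ε ^ 2 + σ * Δt) := by
  unfold cflParabola
  field_simp

end

theorem stmt_5_general (ε σsmin Δx Δy Θ Δt : ℝ)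
    (hε : 0 < ε) (hσ : 0 < σsmin) (hΔx : 0 < Δx) (hΔy : 0 < Δy)
    (hΔt0 : 0 < Δt)
    (hΔt : Δt ≤ σsmin * (Δx ^ 2 * Δy ^ 2) /
      ((2 + Θ ^ 2) * Δx ^ 2 + (1 / 2 + 2 * Θ ^ 2) * (Δx * Δy) + (2 + Θ ^ 2) * Δy ^ 2)) :
    1 - ε ^ 2 / (ε ^ 2 + σsmin * Δt) *
        (2 * Θ * Δt / (ε * Δx) + 2 * Θ * Δt / (ε * Δy) + 2 * Δt ^ 2 / (ε ^ 2 * Δx ^ 2)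
          + Δt ^ 2 / (2 * ε ^ 2 * Δx * Δy) + 2 * Δt ^ 2 / (ε ^ 2 * Δy ^ 2)) ≥ 0 := by
  have hγ : 0 < ε ^ 2 + σsmin * Δt := by positivity
  rw [ge_iff_le, one_sub_mul_eq_cflParabola_div hε.ne' hΔx.ne' hΔy.ne' hγ.ne']
  exact div_nonneg (cflParabola_nonneg ε hΔx hΔy hΔt0.le hΔt) hγ.le

/-- parabolic CFL: if Δt ≤ Δt_par, then condition (C7) holds, i.e.
1 − γ_max (2ΘΔt/(εΔx) + 2ΘΔt/(εΔy) + 2Δt²/(ε²Δx²) + Δt²/(2ε²ΔxΔy) + 2Δt²/(ε²Δy²)) ≥ 0. -/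
theorem stmt_5 (ε σsmin Δx Δy θ Θ Δt : ℝ)
    (hε : 0 < ε) (hσ : 0 < σsmin) (hΔx : 0 < Δx) (hΔy : 0 < Δy)
    (hθ1 : 1 < θ) (hθ2 : θ < 2) (hΘ : Θ = 1 / (2 - θ))
    (hΔt0 : 0 < Δt)
    (hΔt : Δt ≤ σsmin * (Δx ^ 2 * Δy ^ 2) /
      ((2 + Θ ^ 2) * Δx ^ 2 + (1 / 2 + 2 * Θ ^ 2) * (Δx * Δy) + (2 + Θ ^ 2) * Δy ^ 2)) :
    1 - ε ^ 2 / (ε ^ 2 + σsmin * Δt) *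
        (2 * Θ * Δt / (ε * Δx) + 2 * Θ * Δt / (ε * Δy) + 2 * Δt ^ 2 / (ε ^ 2 * Δx ^ 2)
          + Δt ^ 2 / (2 * ε ^ 2 * Δx * Δy) + 2 * Δt ^ 2 / (ε ^ 2 * Δy ^ 2)) ≥ 0 :=
  stmt_5_general ε σsmin Δx Δy Θ Δt hε hσ hΔx hΔy hΔt0 hΔt
end

section
/- Let ε > 0, Δx, Δy > 0, Θ > 0. If 0 < Δt ≤ 2(√(9/8 + Θ²) − Θ) · ε · ΔxΔy(Δx+Δy)/(4Δx² + ΔxΔy + 4Δy²), then ε² − 2Δt(Θε/Δx + Θε/Δy + Δt/Δx² + Δt/(4ΔxΔy) + Δt/Δy²) ≥ 0. -/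
/-!
Write `P = Δx Δy`, `S = Δx + Δy`, `R = 4Δx² + ΔxΔy + 4Δy²`. The left-hand side is
`ε² - (2ΘεS/P) Δt - (R/(2P²)) Δt²`, which decreases in `Δt ≥ 0`, so it suffices to check it at
the bound `τ₀ = 2cεPS/R`, `c = √(9/8 + Θ²) - Θ`. Since `c² + 2Θc = 9/8`, its value there is
`ε² (1 - 9S²/(4R))`, which is nonnegative because `4R - 9S² = 7(Δx - Δy)²`.
-/

lemma sq_add_two_mul_mul_sqrt_sub (a b : ℝ) (h : 0 ≤ a + b ^ 2) :
    (√(a + b ^ 2) - b) ^ 2 + 2 * b * (√(a + b ^ 2) - b) = a := by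
  linear_combination Real.sq_sqrt h

lemma mul_add_mul_sq_le_of_le {α β t t₀ : ℝ} (hα : 0 ≤ α) (hβ : 0 ≤ β) (ht : 0 ≤ t)
    (htt₀ : t ≤ t₀) : α * t + β * t ^ 2 ≤ α * t₀ + β * t₀ ^ 2 := by
  gcongr

lemma nine_mul_add_sq_le (x y : ℝ) : 9 * (x + y) ^ 2 ≤ 4 * (4 * x ^ 2 + x * y + 4 * y ^ 2) := by
  nlinarith [sq_nonneg (x - y)]

lemma linear_add_quadratic_at_sqrt_bound (a Θ ε P S R : ℝ) (ha : 0 ≤ a + Θ ^ 2) (hP : P ≠ 0)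
    (hR : R ≠ 0) :
    let τ₀ := 2 * (√(a + Θ ^ 2) - Θ) * ε * (P * S / R)
    2 * Θ * ε * S / P * τ₀ + R / (2 * P ^ 2) * τ₀ ^ 2 = 2 * a * ε ^ 2 * S ^ 2 / R := by
  intro τ₀
  have hc := sq_add_two_mul_mul_sqrt_sub a Θ ha
  simp only [τ₀]
  field_simp
  linear_combination ε ^ 2 * S ^ 2 * hc

/-- hyperbolic CFL: if Δt ≤ Δt_hyp, then
ε² − 2Δt(Θε/Δx + Θε/Δy + Δt/Δx² + Δt/(4ΔxΔy) + Δt/Δy²) ≥ 0. -/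
theorem stmt_6 (ε Δx Δy Θ Δt : ℝ)
    (hε : 0 < ε) (hΔx : 0 < Δx) (hΔy : 0 < Δy) (hΘ : 0 < Θ)
    (hΔt0 : 0 < Δt)
    (hΔt : Δt ≤ 2 * (Real.sqrt (9 / 8 + Θ ^ 2) - Θ) * ε *
      (Δx * Δy * (Δx + Δy) / (4 * Δx ^ 2 + Δx * Δy + 4 * Δy ^ 2))) :
    ε ^ 2 - 2 * Δt * (Θ * ε / Δx + Θ * ε / Δy + Δt / Δx ^ 2 + Δt / (4 * Δx * Δy)
      + Δt / Δy ^ 2) ≥ 0 := by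
  set P := Δx * Δy
  set S := Δx + Δy
  set R := 4 * Δx ^ 2 + Δx * Δy + 4 * Δy ^ 2
  have hP : 0 < P := by positivity
  have hR : 0 < R := by positivity
  have hexpand : ε ^ 2 - 2 * Δt * (Θ * ε / Δx + Θ * ε / Δy + Δt / Δx ^ 2
      + Δt / (4 * Δx * Δy) + Δt / Δy ^ 2)
      = ε ^ 2 - (2 * Θ * ε * S / P * Δt + R / (2 * P ^ 2) * Δt ^ 2) := by
    simp only [P, S, R]
    field_simp
    ring
  have hmono := mul_add_mul_sq_le_of_le (α := 2 * Θ * ε * S / P) (β := R / (2 * P ^ 2))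
    (by positivity) (by positivity) hΔt0.le hΔt
  rw [linear_add_quadratic_at_sqrt_bound _ Θ ε P S R (by positivity) hP.ne' hR.ne'] at hmono
  have hSR : 9 * S ^ 2 ≤ 4 * R := nine_mul_add_sq_le Δx Δy
  have hbound : 2 * (9 / 8) * ε ^ 2 * S ^ 2 / R ≤ ε ^ 2 := by
    rw [div_le_iff₀ hR]
    nlinarith [sq_nonneg ε]
  rw [hexpand]
  linarith
end
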